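/- Suppose at least one of T_L, T_R contains a pair. Then every feasible 2-TSP solution has min-sum cost at least c(T); in particular OPT^tsp_sum ≥ c(T). -/

import Mathlib

open scoped Classical

noncomputable def cost {α : Type*} [Fintype α] (w : α → α → ℝ) (G : SimpleGraph α) : ℝ :=
  (∑ u : α, ∑ v : α, if G.Adj u v then w u v else 0) / 2

/-- `G` is a minimum spanning tree for the weight function `w`. -/
def IsMST {α : Type*} [Fintype α] (w : α → α → ℝ) (G : SimpleGraph α) : Prop :=
  G.IsTree ∧ ∀ G' : SimpleGraph α, G'.IsTree → cost w G ≤ cost w G'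

/-- Cost of a graph on the subtype of a subset `S`, w.r.t. the restricted weights. -/
noncomputable def subCost {V : Type*} [Fintype V] (w : V → V → ℝ) (S : Set V)
    (G : SimpleGraph S) : ℝ :=
  cost (fun u v : S => w u.1 v.1) G

/-- `G` is a minimum spanning tree of the subset `S` w.r.t. the restricted weights. -/
def IsSubMST {V : Type*} [Fintype V] (w : V → V → ℝ) (S : Set V) (G : SimpleGraph S) : Prop :=
  IsMST (fun u v : S => w u.1 v.1) G

/-- A permutation is a Hamiltonian cycle (cyclic ordering of all elements) iff it is a
single cycle moving every element. -/
def IsHamCycle {α : Type*} (σ : Equiv.Perm α) : Prop :=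
  σ.IsCycle ∧ ∀ x, σ x ≠ x

/-- Cost of the tour determined by a cyclic ordering: sum of the weights of consecutive
pairs. -/
noncomputable def tourCost {α : Type*} [Fintype α] (w : α → α → ℝ) (σ : Equiv.Perm α) : ℝ :=
  ∑ x : α, w x (σ x)

/-- Tour cost on the subtype of a subset `S`, w.r.t. the restricted weights. -/
noncomputable def subTourCost {V : Type*} [Fintype V] (w : V → V → ℝ) (S : Set V)
    (σ : Equiv.Perm S) : ℝ :=
  tourCost (fun u v : S => w u.1 v.1) σ

/-- Optimal min-sum cost of a feasible 2-TSP solution. -/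
noncomputable def OPTtspSum {V : Type*} [Fintype V] {n : ℕ} (w : V → V → ℝ)
    (p q : Fin n → V) : ℝ :=
  sInf {c : ℝ | ∃ B : Set V, (∀ i, (p i ∈ B ↔ q i ∉ B)) ∧
    ∃ (σb : Equiv.Perm B) (σr : Equiv.Perm (Bᶜ : Set V)),
      IsHamCycle σb ∧ IsHamCycle σr ∧ c = subTourCost w B σb + subTourCost w Bᶜ σr}

/-- Optimal min-max cost of a feasible 2-TSP solution. -/
noncomputable def OPTtspMm {V : Type*} [Fintype V] {n : ℕ} (w : V → V → ℝ)
    (p q : Fin n → V) : ℝ :=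
  sInf {c : ℝ | ∃ B : Set V, (∀ i, (p i ∈ B ↔ q i ∉ B)) ∧
    ∃ (σb : Equiv.Perm B) (σr : Equiv.Perm (Bᶜ : Set V)),
      IsHamCycle σb ∧ IsHamCycle σr ∧ c = max (subTourCost w B σb) (subTourCost w Bᶜ σr)}

/-!
Let `e = s(a, b)` be a heaviest edge of the minimum spanning tree `T`; the two components of
`T - e` are the sides of `e`. If a pair lies on one side, then the colour class containing the
endpoint of `e` on the other side meets both sides, so its tour crosses the cut of `e` and, by the
cut property of minimum spanning trees, that crossing step weighs at least `w e`. Dropping it from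
its tour, and any step from the other tour, leaves two Hamiltonian paths; a tree edge between the
two colour classes weighs at most `w e` and joins them into a connected spanning graph whose cost
is at most the min-sum cost of the solution, and which therefore costs at least `c(T)`.
-/

open SimpleGraph Equiv Function

namespace SimpleGraph

variable {V : Type*} {G : SimpleGraph V}

theorem reachable_of_edge_le {u v : V} (h : edge u v ≤ G) : G.Reachable u v := by
  rcases (edge_le_iff G).1 h with rfl | h
  exacts [.rfl, h.reachable]

theorem Connected.exists_adj_mem_not_mem (hG : G.Connected) {S : Set V} {x y : V} (hx : x ∈ S)
    (hy : y ∉ S) : ∃ u ∈ S, ∃ v ∉ S, G.Adj u v := by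
  obtain ⟨d, -, hd, hd'⟩ := (hG.preconnected x y).some.exists_boundary_dart S hx hy
  exact ⟨_, hd, _, hd', d.adj⟩

theorem Connected.reachable_deleteEdges_or (hG : G.Connected) (a b x : V) :
    (G.deleteEdges {s(a, b)}).Reachable a x ∨ (G.deleteEdges {s(a, b)}).Reachable b x := by
  set D := G.deleteEdges {s(a, b)}
  have step : ∀ {y z}, G.Adj y z → D.Reachable a y ∨ D.Reachable b y →
      D.Reachable a z ∨ D.Reachable b z := by
    intro y z hyz hy
    by_cases he : s(y, z) = s(a, b)
    · rcases Sym2.eq_iff.1 he with ⟨-, rfl⟩ | ⟨-, rfl⟩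
      exacts [.inr .rfl, .inl .rfl]
    · have hD : D.Adj y z := by simp [D, hyz, he]
      exact hy.imp (·.trans hD.reachable) (·.trans hD.reachable)
  induction (reachable_iff_reflTransGen a x).1 (hG.preconnected a x) with
  | refl => exact .inl .rfl
  | tail _ hyz ih => exact step hyz ih

end SimpleGraph

section TwoTSP

variable {V : Type*} [Fintype V] {w : V → V → ℝ}

section Cost

theorem cost_bot : cost w ⊥ = 0 := by
  simp [cost]

theorem cost_mono (hnn : ∀ u v, 0 ≤ w u v) {G H : SimpleGraph V} (h : G ≤ H) :
    cost w G ≤ cost w H := by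
  unfold cost
  gcongr with u _ v _
  by_cases hG : G.Adj u v
  · simp [hG, h hG]
  · simp only [hG, if_false]
    split_ifs <;> simp [hnn]

theorem cost_sup_of_disjoint {G H : SimpleGraph V} (h : Disjoint G H) :
    cost w (G ⊔ H) = cost w G + cost w H := by
  unfold cost
  rw [← add_div, ← Finset.sum_add_distrib]
  congr 1
  refine Finset.sum_congr rfl fun u _ => ?_
  rw [← Finset.sum_add_distrib]
  refine Finset.sum_congr rfl fun v _ => ?_
  have hGH : ¬ (G.Adj u v ∧ H.Adj u v) := fun hGH => (h.le_bot : G ⊓ H ≤ ⊥) hGH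
  by_cases hG : G.Adj u v <;> by_cases hH : H.Adj u v <;> simp_all

theorem cost_sup_le (hnn : ∀ u v, 0 ≤ w u v) (G H : SimpleGraph V) :
    cost w (G ⊔ H) ≤ cost w G + cost w H := by
  rw [← sup_sdiff_self_right, cost_sup_of_disjoint disjoint_sdiff_self_right]
  exact add_le_add_right (cost_mono hnn sdiff_le) _

theorem cost_finset_sup_le (hnn : ∀ u v, 0 ≤ w u v) {ι : Type*} (s : Finset ι)
    (G : ι → SimpleGraph V) : cost w (s.sup G) ≤ ∑ i ∈ s, cost w (G i) := by
  induction s using Finset.induction_on with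
  | empty => simp [cost_bot]
  | insert i s hi ih =>
    rw [Finset.sup_insert, Finset.sum_insert hi]
    linarith [cost_sup_le hnn (G i) (s.sup G)]

theorem cost_edge (hsymm : ∀ u v, w u v = w v u) {u v : V} (huv : u ≠ v) :
    cost w (edge u v) = w u v := by
  have hsum : ∑ a : V, ∑ b : V,
      ((if a = u ∧ b = v then w a b else 0) + (if a = v ∧ b = u then w a b else 0))
      = 2 * w u v := by
    simp [Finset.sum_add_distrib, ite_and, hsymm v u, two_mul]
  rw [cost, div_eq_iff two_ne_zero, mul_comm, ← hsum]
  refine Finset.sum_congr rfl fun a _ => Finset.sum_congr rfl fun b _ => ?_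
  by_cases h₁ : a = u ∧ b = v
  · obtain ⟨rfl, rfl⟩ := h₁
    simp [edge_adj, huv, huv.symm]
  · by_cases h₂ : a = v ∧ b = u
    · obtain ⟨rfl, rfl⟩ := h₂
      simp [edge_adj, huv, huv.symm]
    · simp [edge_adj, h₁, h₂]

theorem cost_edge_le (hnn : ∀ u v, 0 ≤ w u v) (hsymm : ∀ u v, w u v = w v u) (u v : V) :
    cost w (edge u v) ≤ w u v := by
  rcases eq_or_ne u v with rfl | huv
  · simp [edge_self_eq_bot, cost_bot, hnn]
  · exact (cost_edge hsymm huv).le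

theorem cost_deleteEdges_add (hsymm : ∀ u v, w u v = w v u) {G : SimpleGraph V} {u v : V}
    (h : G.Adj u v) : cost w (G.deleteEdges {s(u, v)}) + w u v = cost w G := by
  change cost w (G \ edge u v) + w u v = cost w G
  rw [← cost_edge hsymm h.ne, ← cost_sup_of_disjoint disjoint_sdiff_self_left]
  exact congrArg (cost w) (sdiff_sup_cancel ((edge_le_iff G).2 (Or.inr h)))

theorem IsMST.cost_le_of_connected (hnn : ∀ u v, 0 ≤ w u v) {T G : SimpleGraph V}
    (hT : IsMST w T) (hG : G.Connected) : cost w T ≤ cost w G := by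
  obtain ⟨T', hle, hT'⟩ := hG.exists_isTree_le
  exact (hT.2 T' hT').trans (cost_mono hnn hle)

end Cost

section Tour

theorem IsHamCycle.exists_apply_not {α : Type*} [Finite α] {σ : Perm α} (hσ : IsHamCycle σ)
    {P : α → Prop} {a b : α} (ha : P a) (hb : ¬ P b) : ∃ x, P x ∧ ¬ P (σ x) := by
  by_contra! h
  obtain ⟨i, rfl⟩ := hσ.1.exists_pow_eq (hσ.2 a) (hσ.2 b)
  refine hb (Nat.rec ha (fun k hk => ?_) i)
  rw [pow_succ', Perm.mul_apply]
  exact h _ hk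

variable {α : Type*} [Fintype α]

theorem exists_isHamCycle [Nontrivial α] : ∃ σ : Perm α, IsHamCycle σ := by
  obtain ⟨σ, hσ, -⟩ := (Finset.univ : Finset α).exists_cycleOn
  rw [Finset.coe_univ] at hσ
  exact ⟨σ, Perm.isCycle_iff_exists_isCycleOn.2 ⟨_, Set.nontrivial_univ, hσ, fun x _ => trivial⟩,
    fun x => hσ.apply_ne Set.nontrivial_univ trivial⟩

noncomputable def tourPath (f : α → V) (σ : Perm α) (x₀ : α) : SimpleGraph V :=
  (Finset.univ.erase x₀).sup fun x => edge (f x) (f (σ x))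

theorem cost_tourPath_add_le (hnn : ∀ u v, 0 ≤ w u v) (hsymm : ∀ u v, w u v = w v u)
    (f : α → V) (σ : Perm α) (x₀ : α) :
    cost w (tourPath f σ x₀) + w (f x₀) (f (σ x₀)) ≤ tourCost (fun a b => w (f a) (f b)) σ := by
  rw [tourCost, ← Finset.sum_erase_add _ _ (Finset.mem_univ x₀)]
  gcongr
  exact (cost_finset_sup_le hnn _ _).trans
    (Finset.sum_le_sum fun x _ => cost_edge_le hnn hsymm _ _)

theorem IsHamCycle.reachable_tourPath {σ : Perm α} (hσ : IsHamCycle σ) (f : α → V) (x₀ y : α) :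
    (tourPath f σ x₀).Reachable (f (σ x₀)) (f y) := by
  by_contra hy
  obtain ⟨x, hx, hσx⟩ := hσ.exists_apply_not
    (P := fun z => (tourPath f σ x₀).Reachable (f (σ x₀)) (f z)) .rfl hy
  have hx₀ : x ≠ x₀ := by
    rintro rfl
    exact hσx .rfl
  have hle : edge (f x) (f (σ x)) ≤ tourPath f σ x₀ :=
    Finset.le_sup (f := fun x => edge (f x) (f (σ x)))
      (Finset.mem_erase.2 ⟨hx₀, Finset.mem_univ x⟩)
  exact hσx (hx.trans (reachable_of_edge_le hle))

end Tour

section MST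

variable {T : SimpleGraph V}

theorem IsMST.cost_add_le_subTourCost_add (hnn : ∀ u v, 0 ≤ w u v)
    (hsymm : ∀ u v, w u v = w v u) (hT : IsMST w T) {A₁ A₂ : Set V}
    (hA : ∀ v, v ∈ A₁ ∨ v ∈ A₂) {σ₁ : Perm A₁} {σ₂ : Perm A₂} (h₁ : IsHamCycle σ₁)
    (h₂ : IsHamCycle σ₂) (x₁ : A₁) (x₂ : A₂) {g₁ g₂ : V} (hg₁ : g₁ ∈ A₁) (hg₂ : g₂ ∈ A₂) :
    cost w T + w x₁ (σ₁ x₁) + w x₂ (σ₂ x₂) ≤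
      subTourCost w A₁ σ₁ + subTourCost w A₂ σ₂ + w g₁ g₂ := by
  set P₁ := tourPath Subtype.val σ₁ x₁
  set P₂ := tourPath Subtype.val σ₂ x₂
  have reach : ∀ z, (P₁ ⊔ P₂ ⊔ edge g₁ g₂).Reachable z g₁ := by
    intro z
    rcases hA z with hz | hz
    · exact ((h₁.reachable_tourPath _ x₁ ⟨z, hz⟩).symm.trans
        (h₁.reachable_tourPath _ x₁ ⟨g₁, hg₁⟩)).mono (le_sup_left.trans le_sup_left)
    · exact (((h₂.reachable_tourPath _ x₂ ⟨z, hz⟩).symm.trans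
        (h₂.reachable_tourPath _ x₂ ⟨g₂, hg₂⟩)).mono (le_sup_right.trans le_sup_left)).trans
        (reachable_of_edge_le le_sup_right).symm
  have hconn : (P₁ ⊔ P₂ ⊔ edge g₁ g₂).Connected :=
    (connected_iff _).2 ⟨fun x y => (reach x).trans (reach y).symm, ⟨g₁⟩⟩
  unfold subTourCost
  linarith [hT.cost_le_of_connected hnn hconn, cost_sup_le hnn (P₁ ⊔ P₂) (edge g₁ g₂),
    cost_sup_le hnn P₁ P₂, cost_edge_le hnn hsymm g₁ g₂,
    cost_tourPath_add_le hnn hsymm Subtype.val σ₁ x₁,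
    cost_tourPath_add_le hnn hsymm Subtype.val σ₂ x₂]

variable {a b : V}

theorem IsMST.le_weight_of_reachable_deleteEdges (hnn : ∀ u v, 0 ≤ w u v)
    (hsymm : ∀ u v, w u v = w v u) (hT : IsMST w T) (hab : T.Adj a b) {u v : V}
    (hu : (T.deleteEdges {s(a, b)}).Reachable a u)
    (hv : (T.deleteEdges {s(a, b)}).Reachable b v) : w a b ≤ w u v := by
  set D := T.deleteEdges {s(a, b)}
  have hD : ∀ {x y}, D.Reachable x y → (D ⊔ edge u v).Reachable x y := (·.mono le_sup_left)
  have reach : ∀ x, (D ⊔ edge u v).Reachable a x := by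
    intro x
    rcases hT.1.connected.reachable_deleteEdges_or a b x with hx | hx
    · exact hD hx
    · exact (hD hu).trans ((reachable_of_edge_le le_sup_right).trans ((hD hv).symm.trans (hD hx)))
  have hconn : (D ⊔ edge u v).Connected :=
    (connected_iff _).2 ⟨fun x y => (reach x).symm.trans (reach y), ⟨a⟩⟩
  linarith [hT.cost_le_of_connected hnn hconn, cost_sup_le hnn D (edge u v),
    cost_edge_le hnn hsymm u v, cost_deleteEdges_add hsymm hab]

theorem IsMST.exists_le_weight_apply (hnn : ∀ u v, 0 ≤ w u v) (hsymm : ∀ u v, w u v = w v u)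
    (hT : IsMST w T) (hab : T.Adj a b) {A : Set V} {σ : Perm A} (hσ : IsHamCycle σ)
    (hL : ∃ x ∈ A, (T.deleteEdges {s(a, b)}).Reachable a x)
    (hR : ∃ y ∈ A, (T.deleteEdges {s(a, b)}).Reachable b y) : ∃ z : A, w a b ≤ w z (σ z) := by
  obtain ⟨x, hxA, hx⟩ := hL
  obtain ⟨y, hyA, hy⟩ := hR
  have hbridge : ¬ (T.deleteEdges {s(a, b)}).Reachable a b :=
    isBridge_iff.1 (isAcyclic_iff_forall_adj_isBridge.1 hT.1.isAcyclic hab)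
  obtain ⟨z, hz, hσz⟩ := hσ.exists_apply_not
    (P := fun z : A => (T.deleteEdges {s(a, b)}).Reachable a z) (a := ⟨x, hxA⟩) (b := ⟨y, hyA⟩)
    hx fun h => hbridge (h.trans hy.symm)
  exact ⟨z, hT.le_weight_of_reachable_deleteEdges hnn hsymm hab hz
    ((hT.1.connected.reachable_deleteEdges_or a b _).resolve_left hσz)⟩

theorem IsMST.cost_le_subTourCost_add (hnn : ∀ u v, 0 ≤ w u v) (hsymm : ∀ u v, w u v = w v u)
    (hT : IsMST w T) (hab : T.Adj a b) (hmax : ∀ u v, T.Adj u v → w u v ≤ w a b)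
    {A₁ A₂ : Set V} (hA : ∀ v, v ∈ A₁ ∨ v ∈ A₂) {σ₁ : Perm A₁} {σ₂ : Perm A₂}
    (h₁ : IsHamCycle σ₁) (h₂ : IsHamCycle σ₂)
    (hL : ∃ x ∈ A₁, (T.deleteEdges {s(a, b)}).Reachable a x)
    (hR : ∃ y ∈ A₁, (T.deleteEdges {s(a, b)}).Reachable b y)
    (hcross : ∃ u ∈ A₁, ∃ v ∈ A₂, T.Adj u v) :
    cost w T ≤ subTourCost w A₁ σ₁ + subTourCost w A₂ σ₂ := by
  obtain ⟨z, hz⟩ := hT.exists_le_weight_apply hnn hsymm hab h₁ hL hR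
  obtain ⟨u, hu, v, hv, huv⟩ := hcross
  linarith [hT.cost_add_le_subTourCost_add hnn hsymm hA h₁ h₂ z ⟨v, hv⟩ hu hv, hmax u v huv,
    hnn v (σ₂ ⟨v, hv⟩)]

theorem IsMST.cost_le_subTourCost_add_compl (hnn : ∀ u v, 0 ≤ w u v)
    (hsymm : ∀ u v, w u v = w v u) (hT : IsMST w T) (hab : T.Adj a b)
    (hmax : ∀ u v, T.Adj u v → w u v ≤ w a b) {B : Set V} {σb : Perm B} {σr : Perm (Bᶜ : Set V)}
    (hb : IsHamCycle σb) (hr : IsHamCycle σr) {x y : V} (hxy : x ∈ B ↔ y ∉ B)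
    (hside : ((T.deleteEdges {s(a, b)}).Reachable a x ∧ (T.deleteEdges {s(a, b)}).Reachable a y) ∨
      ((T.deleteEdges {s(a, b)}).Reachable b x ∧ (T.deleteEdges {s(a, b)}).Reachable b y)) :
    cost w T ≤ subTourCost w B σb + subTourCost w Bᶜ σr := by
  wlog hxB : x ∈ B generalizing x y
  · exact this (x := y) (y := x) (by tauto) (by tauto) (by tauto)
  have hyB := hxy.1 hxB
  obtain ⟨u, hu, v, hv, huv⟩ := hT.1.connected.exists_adj_mem_not_mem hxB hyB
  have hB := hT.cost_le_subTourCost_add hnn hsymm hab hmax (A₁ := B) (A₂ := Bᶜ)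
    (fun v => em _) hb hr (hcross := ⟨u, hu, v, hv, huv⟩)
  have hBc := hT.cost_le_subTourCost_add hnn hsymm hab hmax (A₁ := Bᶜ) (A₂ := B)
    (fun v => (em _).symm) hr hb (hcross := ⟨v, hv, u, hu, huv.symm⟩)
  rcases hside with ⟨hx, hy⟩ | ⟨hx, hy⟩
  · by_cases hbB : b ∈ B
    · exact hB ⟨x, hxB, hx⟩ ⟨b, hbB, .rfl⟩
    · linarith [hBc ⟨y, hyB, hy⟩ ⟨b, hbB, .rfl⟩]
  · by_cases haB : a ∈ B
    · exact hB ⟨a, haB, .rfl⟩ ⟨x, hxB, hx⟩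
    · linarith [hBc ⟨a, haB, .rfl⟩ ⟨y, hyB, hy⟩]

end MST

theorem exists_feasible_isHamCycle_pair {n : ℕ} (hn : 2 ≤ n) {p q : Fin n → V}
    (hpq : Bijective (Sum.elim p q)) : ∃ B : Set V, (∀ i, (p i ∈ B ↔ q i ∉ B)) ∧
      ∃ (σb : Perm B) (σr : Perm (Bᶜ : Set V)), IsHamCycle σb ∧ IsHamCycle σr := by
  have hq : ∀ j, q j ∉ Set.range p := by
    rintro j ⟨i, h⟩
    exact Sum.inl_ne_inr (hpq.1 h)
  have h01 : (⟨0, by omega⟩ : Fin n) ≠ ⟨1, by omega⟩ := by simp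
  have : Nontrivial (Set.range p) := Set.nontrivial_coe_sort.2
    ⟨_, ⟨_, rfl⟩, _, ⟨_, rfl⟩, fun h => h01 (Sum.inl_injective (hpq.1 h))⟩
  have : Nontrivial ((Set.range p)ᶜ : Set V) := Set.nontrivial_coe_sort.2
    ⟨_, hq _, _, hq _, fun h => h01 (Sum.inr_injective (hpq.1 h))⟩
  obtain ⟨σb, hb⟩ := exists_isHamCycle (α := Set.range p)
  obtain ⟨σr, hr⟩ := exists_isHamCycle (α := ((Set.range p)ᶜ : Set V))
  exact ⟨_, fun i => ⟨fun _ => hq i, fun _ => ⟨i, rfl⟩⟩, σb, σr, hb, hr⟩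

end TwoTSP

theorem stmt_15_general {V : Type*} [Fintype V]
    {n : ℕ} (hn : 3 ≤ n)
    (p q : Fin n → V) (hpq : Function.Bijective (Sum.elim p q))
    (w : V → V → ℝ)
    (hw_symm : ∀ u v, w u v = w v u)
    (hw_nonneg : ∀ u v, 0 ≤ w u v)
    (T : SimpleGraph V) (hT : IsMST w T)
    (vL vR : V) (hadj : T.Adj vL vR)
    (hmax : ∀ a b, T.Adj a b → w a b ≤ w vL vR)
    (VL VR : Set V)
    (hVL : VL = {x | (T.deleteEdges {s(vL, vR)}).Reachable vL x})
    (hVR : VR = {x | (T.deleteEdges {s(vL, vR)}).Reachable vR x})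
    (hpair : (∃ i, p i ∈ VL ∧ q i ∈ VL) ∨ (∃ i, p i ∈ VR ∧ q i ∈ VR)) :
    (∀ B : Set V, (∀ i, (p i ∈ B ↔ q i ∉ B)) →
      ∀ (σb : Equiv.Perm B) (σr : Equiv.Perm (Bᶜ : Set V)),
        IsHamCycle σb → IsHamCycle σr →
          cost w T ≤ subTourCost w B σb + subTourCost w Bᶜ σr) ∧
    cost w T ≤ OPTtspSum w p q := by
  subst hVL hVR
  have hsum : ∀ B : Set V, (∀ i, (p i ∈ B ↔ q i ∉ B)) →
      ∀ (σb : Equiv.Perm B) (σr : Equiv.Perm (Bᶜ : Set V)),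
        IsHamCycle σb → IsHamCycle σr →
          cost w T ≤ subTourCost w B σb + subTourCost w Bᶜ σr := by
    intro B hB σb σr hb hr
    rcases hpair with ⟨i, hside⟩ | ⟨i, hside⟩
    · exact hT.cost_le_subTourCost_add_compl hw_nonneg hw_symm hadj hmax hb hr (hB i) (.inl hside)
    · exact hT.cost_le_subTourCost_add_compl hw_nonneg hw_symm hadj hmax hb hr (hB i) (.inr hside)
  obtain ⟨B, hB, σb, σr, hb, hr⟩ := exists_feasible_isHamCycle_pair (by omega) hpq
  refine ⟨hsum, le_csInf ⟨_, B, hB, σb, σr, hb, hr, rfl⟩ ?_⟩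
  rintro _ ⟨B, hB, σb, σr, hb, hr, rfl⟩
  exact hsum B hB σb σr hb hr

theorem stmt_15 {V : Type*} [Fintype V]
    {n : ℕ} (hn : 3 ≤ n)
    (p q : Fin n → V) (hpq : Function.Bijective (Sum.elim p q))
    (w : V → V → ℝ)
    (hw_self : ∀ v, w v v = 0)
    (hw_symm : ∀ u v, w u v = w v u)
    (hw_nonneg : ∀ u v, 0 ≤ w u v)
    (hw_tri : ∀ u v x, w u v ≤ w u x + w x v)
    (T : SimpleGraph V) (hT : IsMST w T)
    (vL vR : V) (hadj : T.Adj vL vR)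
    (hmax : ∀ a b, T.Adj a b → w a b ≤ w vL vR)
    (VL VR : Set V)
    (hVL : VL = {x | (T.deleteEdges {s(vL, vR)}).Reachable vL x})
    (hVR : VR = {x | (T.deleteEdges {s(vL, vR)}).Reachable vR x})
    (hpair : (∃ i, p i ∈ VL ∧ q i ∈ VL) ∨ (∃ i, p i ∈ VR ∧ q i ∈ VR)) :
    (∀ B : Set V, (∀ i, (p i ∈ B ↔ q i ∉ B)) →
      ∀ (σb : Equiv.Perm B) (σr : Equiv.Perm (Bᶜ : Set V)),
        IsHamCycle σb → IsHamCycle σr →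
          cost w T ≤ subTourCost w B σb + subTourCost w Bᶜ σr) ∧
    cost w T ≤ OPTtspSum w p q :=
  stmt_15_general hn p q hpq w hw_symm hw_nonneg T hT vL vR hadj hmax VL VR hVL hVR hpair
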